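/- Let 𝒞 be a concept class on a measurable space Ω and 𝒫 a family of probability measures. Fix ε, δ > 0 and for each countable subclass 𝒞' ⊆ 𝒞 let s(𝒞') be the least sample size n₀ such that for all n ≥ n₀ and all μ ∈ 𝒫, μⁿ{σ : sup_{C ∈ 𝒞'}|μₙ(σ)(C) − μ(C)| ≥ ε} ≤ δ, assuming it exists for every countable subclass. Then 𝒞' ↦ s(𝒞') is monotone under inclusion and uniformly bounded over all countable subclasses 𝒞' of 𝒞. -/

import Mathlib

/-!
Enlarging the class can only enlarge the uniform deviation `sup_C |μₙ(σ)(C) - μ(C)|` (all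
deviations lie in `[0, 1]`), so a sample size that works for a class works for each of its
subclasses; minimality of `s` then gives monotonicity. If `s` were unbounded on countable
subclasses, pick countable `𝒞_N` with `N < s 𝒞_N`; their union is countable and by
monotonicity `s` of it exceeds every `N`.
-/

open MeasureTheory Set

/-- Empirical measure of the set `C` on a sample `σ` of size `n`. -/
noncomputable def empMeas {Ω : Type*} (n : ℕ) (σ : Fin n → Ω) (C : Set Ω) : ℝ :=
  (Nat.card {i : Fin n // σ i ∈ C} : ℝ) / n

/-- `n₀` is a uniform Glivenko–Cantelli sample-complexity bound for the class `𝒞`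
at accuracy `ε` and confidence `δ`, with respect to the family `P` of measures
(outer probabilities are used for the possibly non-measurable event). -/
def GoodBound {Ω : Type*} [MeasurableSpace Ω] (P : Set (Measure Ω)) (ε δ : ℝ)
    (𝒞 : Set (Set Ω)) (n₀ : ℕ) : Prop :=
  ∀ n : ℕ, n₀ ≤ n → ∀ μ ∈ P,
    (Measure.pi fun _ : Fin n => μ)
      {σ : Fin n → Ω | ε ≤ ⨆ C ∈ 𝒞, |empMeas n σ C - (μ C).toReal|} ≤ ENNReal.ofReal δ

/-- In `ℝ`, `⨆` over an empty index is `0`, hence the nonnegativity hypothesis. -/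
theorem Real.biSup_mono_of_bddAbove {α : Type*} {f : α → ℝ} (hf₀ : ∀ x, 0 ≤ f x)
    (hf : BddAbove (range f)) {s t : Set α} (hst : s ⊆ t) :
    ⨆ x ∈ s, f x ≤ ⨆ x ∈ t, f x := by
  have h₀ : 0 ≤ ⨆ x ∈ t, f x := Real.iSup_nonneg fun x => Real.iSup_nonneg fun _ => hf₀ x
  have hbdd : BddAbove (⋃ x, range fun _ : x ∈ t => f x) :=
    hf.mono (iUnion_subset fun x => range_subset_iff.2 fun _ => mem_range_self x)
  exact Real.iSup_le (fun x => Real.iSup_le (fun hx => le_ciSup₂ hbdd x (hst hx)) h₀) h₀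

theorem bddAbove_image_of_monotoneOn_countable {α : Type*} {𝒞 : Set α} {s : Set α → ℕ}
    (hs : MonotoneOn s {A | A ⊆ 𝒞 ∧ A.Countable}) :
    BddAbove (s '' {A | A ⊆ 𝒞 ∧ A.Countable}) := by
  by_contra hunbdd
  have hbig : ∀ N : ℕ, ∃ A, (A ⊆ 𝒞 ∧ A.Countable) ∧ N < s A := by
    simpa [not_bddAbove_iff] using hunbdd
  choose A hA hsA using hbig
  choose hA𝒞 hAc using hA
  have hD : (⋃ N, A N) ⊆ 𝒞 ∧ (⋃ N, A N).Countable := ⟨iUnion_subset hA𝒞, countable_iUnion hAc⟩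
  have hlt : ∀ N, N < s (⋃ N, A N) := fun N =>
    (hsA N).trans_le (hs ⟨hA𝒞 N, hAc N⟩ hD (subset_iUnion A N))
  exact lt_irrefl _ (hlt _)

theorem empMeas_le_one {Ω : Type*} (n : ℕ) (σ : Fin n → Ω) (C : Set Ω) :
    empMeas n σ C ≤ 1 :=
  div_le_one_of_le₀ (by simpa using Finite.card_subtype_le fun i => σ i ∈ C) n.cast_nonneg

theorem abs_empMeas_sub_le_one {Ω : Type*} [MeasurableSpace Ω] (μ : Measure Ω)
    [IsProbabilityMeasure μ] (n : ℕ) (σ : Fin n → Ω) (C : Set Ω) :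
    |empMeas n σ C - (μ C).toReal| ≤ 1 :=
  abs_sub_le_of_nonneg_of_le (by unfold empMeas; positivity) (empMeas_le_one n σ C)
    ENNReal.toReal_nonneg measureReal_le_one

theorem GoodBound.subset {Ω : Type*} [MeasurableSpace Ω] {P : Set (Measure Ω)}
    (hP : ∀ μ ∈ P, IsProbabilityMeasure μ) {ε δ : ℝ} {𝒞₁ 𝒞₂ : Set (Set Ω)} {n₀ : ℕ}
    (h : GoodBound P ε δ 𝒞₂ n₀) (h₁₂ : 𝒞₁ ⊆ 𝒞₂) : GoodBound P ε δ 𝒞₁ n₀ := by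
  intro n hn μ hμ
  have := hP μ hμ
  refine (measure_mono fun σ hσ => ?_).trans (h n hn μ hμ)
  exact le_trans hσ <| Real.biSup_mono_of_bddAbove (fun _ => abs_nonneg _)
    ⟨1, forall_mem_range.2 (abs_empMeas_sub_le_one μ n σ)⟩ h₁₂

theorem least_sample_complexity_monotone_bounded_general {Ω : Type*} [MeasurableSpace Ω]
    (𝒞 : Set (Set Ω)) (P : Set (Measure Ω)) (hP : ∀ μ ∈ P, IsProbabilityMeasure μ)
    (ε δ : ℝ)
    (s : Set (Set Ω) → ℕ)
    (hs : ∀ 𝒞' ⊆ 𝒞, 𝒞'.Countable →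
      GoodBound P ε δ 𝒞' (s 𝒞') ∧ ∀ m : ℕ, GoodBound P ε δ 𝒞' m → s 𝒞' ≤ m) :
    (∀ 𝒞₁ ⊆ 𝒞, ∀ 𝒞₂ ⊆ 𝒞, 𝒞₁.Countable → 𝒞₂.Countable → 𝒞₁ ⊆ 𝒞₂ → s 𝒞₁ ≤ s 𝒞₂) ∧
    ∃ N : ℕ, ∀ 𝒞' ⊆ 𝒞, 𝒞'.Countable → s 𝒞' ≤ N := by
  have hmono : MonotoneOn s {A | A ⊆ 𝒞 ∧ A.Countable} := fun _ h₁ _ h₂ h₁₂ =>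
    (hs _ h₁.1 h₁.2).2 _ ((hs _ h₂.1 h₂.2).1.subset hP h₁₂)
  obtain ⟨N, hN⟩ := bddAbove_image_of_monotoneOn_countable hmono
  exact ⟨fun _ h₁ _ h₂ hc₁ hc₂ => hmono ⟨h₁, hc₁⟩ ⟨h₂, hc₂⟩,
    ⟨N, fun _ h hc => hN ⟨_, ⟨h, hc⟩, rfl⟩⟩⟩

/-- the least sample-complexity function on countable subclasses is
monotone under inclusion and uniformly bounded. -/
theorem least_sample_complexity_monotone_bounded {Ω : Type*} [MeasurableSpace Ω]
    (𝒞 : Set (Set Ω)) (P : Set (Measure Ω)) (hP : ∀ μ ∈ P, IsProbabilityMeasure μ)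
    (ε δ : ℝ) (hε : 0 < ε) (hδ : 0 < δ)
    (s : Set (Set Ω) → ℕ)
    (hs : ∀ 𝒞' ⊆ 𝒞, 𝒞'.Countable →
      GoodBound P ε δ 𝒞' (s 𝒞') ∧ ∀ m : ℕ, GoodBound P ε δ 𝒞' m → s 𝒞' ≤ m) :
    (∀ 𝒞₁ ⊆ 𝒞, ∀ 𝒞₂ ⊆ 𝒞, 𝒞₁.Countable → 𝒞₂.Countable → 𝒞₁ ⊆ 𝒞₂ → s 𝒞₁ ≤ s 𝒞₂) ∧
    ∃ N : ℕ, ∀ 𝒞' ⊆ 𝒞, 𝒞'.Countable → s 𝒞' ≤ N :=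
  least_sample_complexity_monotone_bounded_general 𝒞 P hP ε δ s hs
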